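/- (Positivity propagation for the explicit SG recursion.) Let x ≥ y > 0 and set N = √(4x² + 6xy + 6y²), x' = (1/15)(14x + 3y − 2N), y' = (1/5)(−2x + y + N). Then x' > 0, y' > 0, and x' ≥ y'. Consequently, for any initial pair x0 ≥ y0 > 0 there is a (unique) sequence (x_n, y_n)_{n≥0} following the explicit SG recursion, and it satisfies x_n ≥ y_n > 0 for all n ≥ 0. -/
import Mathlib


noncomputable section

/-- `N(x, y) = √(4x² + 6xy + 6y²)`. -/
def NSG (x y : ℝ) : ℝ := Real.sqrt (4 * x ^ 2 + 6 * x * y + 6 * y ^ 2)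

/-- A sequence of positive pairs following the explicit SG recursion. -/
def FollowsSG (X Y : ℕ → ℝ) : Prop :=
  (∀ n, 0 < X n ∧ 0 < Y n) ∧
  ∀ n, X (n + 1) = (14 * X n + 3 * Y n - 2 * NSG (X n) (Y n)) / 15 ∧
       Y (n + 1) = (-2 * X n + Y n + NSG (X n) (Y n)) / 5

lemma NSG_sq (x y : ℝ) (hy : 0 < y) (hxy : y ≤ x) :
    NSG x y ^ 2 = 4 * x ^ 2 + 6 * x * y + 6 * y ^ 2 := by
  have hx : 0 < x := lt_of_lt_of_le hy hxy
  exact Real.sq_sqrt (by nlinarith)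

lemma key (x y : ℝ) (hy : 0 < y) (hxy : y ≤ x) :
    0 < (14 * x + 3 * y - 2 * NSG x y) / 15 ∧
      0 < (-2 * x + y + NSG x y) / 5 ∧
      (-2 * x + y + NSG x y) / 5 ≤ (14 * x + 3 * y - 2 * NSG x y) / 15 := by
  have hx : 0 < x := lt_of_lt_of_le hy hxy
  have hN0 : 0 ≤ NSG x y := Real.sqrt_nonneg _
  have hN2 := NSG_sq x y hy hxy
  set N := NSG x y with hN
  refine ⟨by nlinarith [sq_nonneg (2 * N - 14 * x - 3 * y)], ?_, ?_⟩
  · nlinarith [sq_nonneg (N - 2 * x + y)]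
  · nlinarith [sq_nonneg (N - 4 * x)]

/-- The iterated pair sequence. -/
def PSG (x0 y0 : ℝ) : ℕ → ℝ × ℝ
  | 0 => (x0, y0)
  | n + 1 =>
    let p := PSG x0 y0 n
    ((14 * p.1 + 3 * p.2 - 2 * NSG p.1 p.2) / 15,
     (-2 * p.1 + p.2 + NSG p.1 p.2) / 5)

theorem stmt19 :
    (∀ x y : ℝ, 0 < y → y ≤ x →
      0 < (14 * x + 3 * y - 2 * NSG x y) / 15 ∧
      0 < (-2 * x + y + NSG x y) / 5 ∧
      (-2 * x + y + NSG x y) / 5 ≤ (14 * x + 3 * y - 2 * NSG x y) / 15) ∧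
    (∀ x0 y0 : ℝ, 0 < y0 → y0 ≤ x0 →
      ∃ X Y : ℕ → ℝ, X 0 = x0 ∧ Y 0 = y0 ∧ FollowsSG X Y ∧
        (∀ n, Y n ≤ X n) ∧
        (∀ X' Y' : ℕ → ℝ, X' 0 = x0 → Y' 0 = y0 → FollowsSG X' Y' →
          ∀ n, X' n = X n ∧ Y' n = Y n)) := by
  refine ⟨fun x y hy hxy => key x y hy hxy, fun x0 y0 hy0 hxy0 => ?_⟩
  set X : ℕ → ℝ := fun n => (PSG x0 y0 n).1 with hX
  set Y : ℕ → ℝ := fun n => (PSG x0 y0 n).2 with hY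
  have hinv : ∀ n, 0 < Y n ∧ Y n ≤ X n := by
    intro n
    induction n with
    | zero => exact ⟨hy0, hxy0⟩
    | succ n ih =>
      obtain ⟨h1, h2⟩ := ih
      obtain ⟨k1, k2, k3⟩ := key (X n) (Y n) h1 h2
      exact ⟨k2, k3⟩
  refine ⟨X, Y, rfl, rfl, ⟨fun n => ⟨lt_of_lt_of_le (hinv n).1 (hinv n).2, (hinv n).1⟩,
    fun n => ⟨rfl, rfl⟩⟩, fun n => (hinv n).2, ?_⟩
  intro X' Y' hX0 hY0 ⟨_, hrec⟩ n
  induction n with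
  | zero => exact ⟨hX0, hY0⟩
  | succ n ih =>
    obtain ⟨e1, e2⟩ := ih
    obtain ⟨r1, r2⟩ := hrec n
    constructor
    · rw [r1, e1, e2]; rfl
    · rw [r2, e1, e2]; rfl
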